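/- For every integer n, BP(n)·(BP(n))*_{ij} + BP(n−1)·(BP(n−1))*_{ij} = 6·Q(2n+2)·1. -/

import Mathlib

/-! For `x = a + b i + c j + d ij` one has
`x · x*_{ij} = (a² + b² + c² + d²) + 2 (a d - b c) ij`. For consecutive Pell numbers the
`ij`-parts `P n P (n+3) - P (n+1) P (n+2)` alternate in sign, so they cancel in the sum, while
the real parts add up to `6 (P n² + 2 P (n+1)² + P (n+2)²)`. That quadratic form and
`n ↦ Q (2n+2)` both satisfy `x (n+2) = 6 x (n+1) - x n` and agree at `n = 0, 1`. -/

open scoped TensorProduct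

noncomputable def bi : ℂ ⊗[ℝ] ℂ := Complex.I ⊗ₜ[ℝ] 1
noncomputable def bj : ℂ ⊗[ℝ] ℂ := (1 : ℂ) ⊗ₜ[ℝ] Complex.I
noncomputable def bij : ℂ ⊗[ℝ] ℂ := Complex.I ⊗ₜ[ℝ] Complex.I

/-- The bicomplex Pell number `BP n = P n + P (n+1) i + P (n+2) j + P (n+3) ij`. -/
noncomputable def BP (P : ℤ → ℤ) (n : ℤ) : ℂ ⊗[ℝ] ℂ :=
  (P n : ℝ) • (1 : ℂ ⊗[ℝ] ℂ) + (P (n + 1) : ℝ) • bi + (P (n + 2) : ℝ) • bj +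
    (P (n + 3) : ℝ) • bij

/-- The ij-conjugate of the bicomplex Pell number. -/
noncomputable def BPconjIJ (P : ℤ → ℤ) (n : ℤ) : ℂ ⊗[ℝ] ℂ :=
  (P n : ℝ) • (1 : ℂ ⊗[ℝ] ℂ) - (P (n + 1) : ℝ) • bi - (P (n + 2) : ℝ) • bj +
    (P (n + 3) : ℝ) • bij

theorem eq_of_two_step_recurrence {R : Type*} [CommRing R] [NoZeroDivisors R] {a b : R}
    (hb : b ≠ 0) {x y : ℤ → R} (hx : ∀ n, x (n + 2) = a * x (n + 1) + b * x n)
    (hy : ∀ n, y (n + 2) = a * y (n + 1) + b * y n) (h0 : x 0 = y 0) (h1 : x 1 = y 1) :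
    x = y := by
  suffices h : ∀ n : ℤ, x n = y n ∧ x (n + 1) = y (n + 1) from funext fun n => (h n).1
  intro n
  induction n using Int.induction_on with
  | zero => exact ⟨h0, by simpa using h1⟩
  | succ k ih =>
    refine ⟨ih.2, ?_⟩
    rw [add_assoc, one_add_one_eq_two, hx, hy, ih.1, ih.2]
  | pred k ih =>
    refine ⟨?_, by simpa using ih.1⟩
    have hx' := hx (-k - 1)
    have hy' := hy (-k - 1)
    rw [show -(k : ℤ) - 1 + 2 = -k + 1 by ring, sub_add_cancel, ih.1, ih.2] at hx'
    rw [show -(k : ℤ) - 1 + 2 = -k + 1 by ring, sub_add_cancel, hx', add_right_inj] at hy'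
    exact mul_left_cancel₀ hb hy'

section PellRecurrence

variable {X : ℤ → ℤ}

theorem pell_add_four (hX : ∀ n, X (n + 2) = 2 * X (n + 1) + X n) (n : ℤ) :
    X (n + 4) = 6 * X (n + 2) - X n := by
  grind

def pellSqForm (X : ℤ → ℤ) (n : ℤ) : ℤ :=
  X n ^ 2 + 2 * X (n + 1) ^ 2 + X (n + 2) ^ 2

def pellSqSum (X : ℤ → ℤ) (n : ℤ) : ℤ :=
  X n ^ 2 + X (n + 1) ^ 2 + X (n + 2) ^ 2 + X (n + 3) ^ 2

def pellCross (X : ℤ → ℤ) (n : ℤ) : ℤ :=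
  X n * X (n + 3) - X (n + 1) * X (n + 2)

theorem pellSqSum_add_pellSqSum_sub_one (hX : ∀ n, X (n + 2) = 2 * X (n + 1) + X n) (n : ℤ) :
    pellSqSum X n + pellSqSum X (n - 1) = 6 * pellSqForm X n := by
  unfold pellSqSum pellSqForm
  grind

theorem pellSqForm_add_two (hX : ∀ n, X (n + 2) = 2 * X (n + 1) + X n) (n : ℤ) :
    pellSqForm X (n + 2) = 6 * pellSqForm X (n + 1) + -1 * pellSqForm X n := by
  unfold pellSqForm
  grind

theorem pellCross_add_one (hX : ∀ n, X (n + 2) = 2 * X (n + 1) + X n) (n : ℤ) :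
    pellCross X (n + 1) = -pellCross X n := by
  unfold pellCross
  grind

end PellRecurrence

theorem pellLucas_two_mul_add_two {P Q : ℤ → ℤ}
    (hP : ∀ n, P (n + 2) = 2 * P (n + 1) + P n) (hP0 : P 0 = 0) (hP1 : P 1 = 1)
    (hQ : ∀ n, Q (n + 2) = 2 * Q (n + 1) + Q n) (hQ0 : Q 0 = 2) (hQ1 : Q 1 = 2) (n : ℤ) :
    Q (2 * n + 2) = pellSqForm P n := by
  have hP2 : P 2 = 2 := by simpa [hP0, hP1] using hP 0
  have hP3 : P 3 = 5 := by simpa [hP1, hP2] using hP 1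
  have hQ2 : Q 2 = 6 := by simpa [hQ0, hQ1] using hQ 0
  have hQ3 : Q 3 = 14 := by simpa [hQ1, hQ2] using hQ 1
  have hQ4 : Q 4 = 34 := by simpa [hQ2, hQ3] using hQ 2
  refine congrFun (eq_of_two_step_recurrence (a := 6) (b := -1) (x := fun n => Q (2 * n + 2))
    (by norm_num) (fun n => ?_) (pellSqForm_add_two hP) ?_ ?_) n
  · rw [show 2 * (n + 2) + 2 = 2 * n + 2 + 4 by ring,
      show 2 * (n + 1) + 2 = 2 * n + 2 + 2 by ring, pell_add_four hQ]
    ring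
  · norm_num [pellSqForm, hP0, hP1, hP2, hQ2]
  · norm_num [pellSqForm, hP1, hP2, hP3, hQ4]

lemma bi_mul_bi : bi * bi = -1 := by
  simp [bi, Algebra.TensorProduct.one_def, ← TensorProduct.neg_tmul]

lemma bj_mul_bj : bj * bj = -1 := by
  simp [bj, Algebra.TensorProduct.one_def, ← TensorProduct.tmul_neg]

lemma bi_mul_bj : bi * bj = bij := by
  simp [bi, bj, bij]

lemma bij_mul_bij : bij * bij = 1 := by
  simp [bij, Algebra.TensorProduct.one_def, TensorProduct.neg_tmul, TensorProduct.tmul_neg]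

lemma bi_mul_bij : bi * bij = -bj := by
  simp [bi, bj, bij, TensorProduct.neg_tmul]

lemma bj_mul_bij : bj * bij = -bi := by
  simp [bi, bj, bij, TensorProduct.tmul_neg]

lemma mul_conjIJ (a b c d : ℝ) :
    (a • (1 : ℂ ⊗[ℝ] ℂ) + b • bi + c • bj + d • bij) * (a • 1 - b • bi - c • bj + d • bij) =
      (a ^ 2 + b ^ 2 + c ^ 2 + d ^ 2) • 1 + (2 * (a * d - b * c)) • bij := by
  simp only [mul_add, add_mul, mul_sub, smul_mul_smul_comm, one_mul, mul_one,
    bi_mul_bi, bj_mul_bj, bij_mul_bij, bi_mul_bij, bj_mul_bij, bi_mul_bj,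
    mul_comm bj bi, mul_comm bij bi, mul_comm bij bj, smul_neg]
  module

lemma BP_mul_BPconjIJ (P : ℤ → ℤ) (n : ℤ) :
    BP P n * BPconjIJ P n = (pellSqSum P n : ℝ) • 1 + (2 * pellCross P n : ℝ) • bij := by
  rw [BP, BPconjIJ, mul_conjIJ, pellSqSum, pellCross]
  push_cast
  rfl

theorem bicomplexPell_mul_conjIJ_add (P Q : ℤ → ℤ)
    (hP : ∀ n : ℤ, P (n + 2) = 2 * P (n + 1) + P n) (hP0 : P 0 = 0) (hP1 : P 1 = 1)
    (hQ : ∀ n : ℤ, Q (n + 2) = 2 * Q (n + 1) + Q n) (hQ0 : Q 0 = 2) (hQ1 : Q 1 = 2)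
    (n : ℤ) :
    BP P n * BPconjIJ P n + BP P (n - 1) * BPconjIJ P (n - 1) =
      (6 * (Q (2 * n + 2) : ℝ)) • (1 : ℂ ⊗[ℝ] ℂ) := by
  have hcross : pellCross P n + pellCross P (n - 1) = 0 := by
    have h := pellCross_add_one hP (n - 1)
    rw [sub_add_cancel] at h
    omega
  have hsq : pellSqSum P n + pellSqSum P (n - 1) = 6 * Q (2 * n + 2) := by
    rw [pellSqSum_add_pellSqSum_sub_one hP, ← pellLucas_two_mul_add_two hP hP0 hP1 hQ hQ0 hQ1]
  rw [BP_mul_BPconjIJ, BP_mul_BPconjIJ, add_add_add_comm, ← add_smul, ← add_smul, ← mul_add,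
    ← Int.cast_add, ← Int.cast_add, hcross, hsq]
  simp
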